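/- Let λ ≥ 0, γ ≥ 0 with λ·γ ≤ 1. Let S : ℝ^N → ℝ^{g·w} be a linear map satisfying S* S = I (the analysis operator of a Parseval frame, with S* the adjoint). Partition the coordinates of ℝ^{g·w} into g non-overlapping groups of size w, and define 𝐏_γ(t) = ∑_{j=1}^{g} P_γ(t^{(j)}), where t^{(j)} ∈ ℝ^w is the j-th group of coordinates of t. Then for any y ∈ ℝ^N, the function x ↦ (1/2)·‖y − x‖₂² + λ·𝐏_γ(S x) is convex on ℝ^N. -/

import Mathlib

open Finset

/-- The penalty `P_gamma(x) = gamma * (sum_{i<m} |x_i| |x_m|) + sum_i |x_i|` on R^n. -/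
noncomputable def P (n : ℕ) (γ : ℝ) (x : Fin n → ℝ) : ℝ :=
  γ * (∑ i : Fin n, ∑ m ∈ Finset.Ioi i, |x i| * |x m|) + ∑ i : Fin n, |x i|

/-!
Since `2 ∑_{i<m} |u_i| |u_m| = ‖u‖₁² - ‖u‖₂²`, the penalty splits as
`P_γ(u) = (γ/2) ‖u‖₁² + ‖u‖₁ - (γ/2) ‖u‖₂²`, a convex function minus a multiple of `‖u‖₂²`.
As `S` is an isometry, `∑_j ‖(S x)^{(j)}‖₂² = ‖x‖₂²`, so the concave parts of `λ 𝐏_γ(S x)` add up to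
`-(λγ/2) ‖x‖₂²`, which the data term `(1/2) ‖y - x‖₂²` absorbs as soon as `λγ ≤ 1`.
-/

theorem sq_sum_eq_sum_sq_add_two_mul_sum_Ioi {ι R : Type*} [Fintype ι] [LinearOrder ι]
    [LocallyFiniteOrderTop ι] [LocallyFiniteOrderBot ι] [CommSemiring R] (a : ι → R) :
    (∑ i, a i) ^ 2 = ∑ i, a i ^ 2 + 2 * ∑ i, ∑ m ∈ Ioi i, a i * a m := by
  have sum_Iio_eq_sum_Ioi : ∑ i, ∑ m ∈ Iio i, a i * a m = ∑ i, ∑ m ∈ Ioi i, a i * a m := by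
    rw [sum_comm' (s' := fun m => Ioi m) (t' := univ) (by simp)]
    simp_rw [mul_comm]
  have row_split : ∀ i, ∑ m, a i * a m
      = a i ^ 2 + (∑ m ∈ Ioi i, a i * a m + ∑ m ∈ Iio i, a i * a m) := fun i => by
    rw [← sum_disjUnion (disjoint_Ioi_Iio i), Ioi_disjUnion_Iio, sq,
      ← sum_singleton (fun m => a i * a m) i, sum_add_sum_compl]
  rw [sq, sum_mul_sum]
  simp_rw [row_split]
  rw [sum_add_distrib, sum_add_distrib, sum_Iio_eq_sum_Ioi]
  ring

theorem convexOn_sum {ι E : Type*} [AddCommMonoid E] [Module ℝ E] {s : Set E}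
    (hs : Convex ℝ s) (t : Finset ι) {f : ι → E → ℝ} (hf : ∀ i ∈ t, ConvexOn ℝ s (f i)) :
    ConvexOn ℝ s (fun x => ∑ i ∈ t, f i x) := by
  classical
  induction t using Finset.cons_induction with
  | empty => simpa using convexOn_const 0 hs
  | cons a t ha ih =>
    simp_rw [sum_cons]
    exact (hf a (mem_cons_self a t)).add (ih fun i hi => hf i (mem_cons_of_mem hi))

noncomputable def convexPenalty {ι : Type*} [Fintype ι] (γ : ℝ) (u : ι → ℝ) : ℝ :=
  γ / 2 * (∑ i, |u i|) ^ 2 + ∑ i, |u i|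

theorem P_eq_convexPenalty_sub (n : ℕ) (γ : ℝ) (u : Fin n → ℝ) :
    P n γ u = convexPenalty γ u - γ / 2 * ∑ i, u i ^ 2 := by
  have h := sq_sum_eq_sum_sq_add_two_mul_sum_Ioi (fun i => |u i|)
  simp only [sq_abs] at h
  rw [P, convexPenalty, h]
  ring

theorem convexOn_sum_abs {ι : Type*} [Fintype ι] :
    ConvexOn ℝ Set.univ (fun u : ι → ℝ => ∑ i, |u i|) :=
  convexOn_sum convex_univ univ fun i _ =>
    (convexOn_univ_norm (E := ℝ)).comp_linearMap (LinearMap.proj (φ := fun _ : ι => ℝ) i)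

theorem convexOn_convexPenalty {ι : Type*} [Fintype ι] {γ : ℝ} (hγ : 0 ≤ γ) :
    ConvexOn ℝ Set.univ (convexPenalty (ι := ι) γ) := by
  have sq_convex : ConvexOn ℝ Set.univ (fun u : ι → ℝ => (∑ i, |u i|) ^ 2) :=
    convexOn_sum_abs.pow (fun u _ => sum_nonneg fun i _ => abs_nonneg (u i)) 2
  exact (sq_convex.smul (by positivity : 0 ≤ γ / 2)).add convexOn_sum_abs

theorem convexOn_half_sq_sub_mul_sq {c : ℝ} (hc : c ≤ 1) (a : ℝ) :
    ConvexOn ℝ Set.univ (fun t : ℝ => 1 / 2 * (a - t) ^ 2 - c / 2 * t ^ 2) := by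
  have expand : (fun t : ℝ => 1 / 2 * (a - t) ^ 2 - c / 2 * t ^ 2)
      = fun t => (1 - c) / 2 * t ^ 2 + (-a * t + a ^ 2 / 2) := by
    funext t; ring
  rw [expand]
  refine ((Even.convexOn_pow even_two).smul (by linarith : 0 ≤ (1 - c) / 2)).add ?_
  exact (LinearMap.convexOn (LinearMap.lsmul ℝ ℝ (-a)) convex_univ).add
    (convexOn_const _ convex_univ)

theorem convexOn_half_sq_dist_sub_mul_sq {ι : Type*} [Fintype ι] {c : ℝ} (hc : c ≤ 1)
    (y : ι → ℝ) :
    ConvexOn ℝ Set.univ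
      (fun x : ι → ℝ => 1 / 2 * ∑ i, (y i - x i) ^ 2 - c / 2 * ∑ i, x i ^ 2) := by
  have coordinatewise : (fun x : ι → ℝ => 1 / 2 * ∑ i, (y i - x i) ^ 2 - c / 2 * ∑ i, x i ^ 2)
      = fun x => ∑ i, (1 / 2 * (y i - x i) ^ 2 - c / 2 * x i ^ 2) := by
    funext x; rw [sum_sub_distrib, mul_sum, mul_sum]
  rw [coordinatewise]
  exact convexOn_sum convex_univ univ fun i _ =>
    (convexOn_half_sq_sub_mul_sq hc (y i)).comp_linearMap
      (LinearMap.proj (φ := fun _ : ι => ℝ) i)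

/-- Prop. 8: for a Parseval frame analysis operator `S` (i.e. `S* S = I`) and
`lam * gamma ≤ 1`, the analysis-prior denoising cost is convex. -/
theorem analysis_convex (N g w : ℕ) (lam γ : ℝ) (hlam : 0 ≤ lam) (hγ : 0 ≤ γ)
    (hlγ : lam * γ ≤ 1)
    (S : (Fin N → ℝ) →ₗ[ℝ] (Fin g → Fin w → ℝ))
    (hS : ∀ x y : Fin N → ℝ, ∑ j : Fin g, ∑ i : Fin w, S x j i * S y j i = ∑ i : Fin N, x i * y i)
    (y : Fin N → ℝ) :
    ConvexOn ℝ Set.univ (fun x : Fin N → ℝ =>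
      (1 / 2) * ∑ i : Fin N, (y i - x i) ^ 2 + lam * ∑ j : Fin g, P w γ (S x j)) := by
  have parseval : ∀ x, ∑ j, ∑ i, S x j i ^ 2 = ∑ i, x i ^ 2 := fun x => by
    simpa only [sq] using hS x x
  have regroup : (fun x : Fin N → ℝ =>
      (1 / 2) * ∑ i : Fin N, (y i - x i) ^ 2 + lam * ∑ j : Fin g, P w γ (S x j))
      = fun x => (1 / 2 * ∑ i, (y i - x i) ^ 2 - lam * γ / 2 * ∑ i, x i ^ 2)
          + lam * ∑ j, convexPenalty γ (S x j) := by
    funext x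
    simp only [P_eq_convexPenalty_sub, sum_sub_distrib, ← mul_sum, parseval]
    ring
  have penalty_convex : ConvexOn ℝ Set.univ
      (fun x : Fin N → ℝ => ∑ j, convexPenalty γ (S x j)) :=
    convexOn_sum convex_univ univ fun j _ =>
      (convexOn_convexPenalty hγ).comp_linearMap ((LinearMap.proj j).comp S)
  rw [regroup]
  exact (convexOn_half_sq_dist_sub_mul_sq hlγ y).add (penalty_convex.smul hlam)
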